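/- arXiv:1911.10513 — 3 statements merged into one kernel-verified Lean document; each statement's English description precedes it below -/
import Mathlib

section
/- For every finite-dimensional right A-module M, every submodule L of M, and every δ ∈ ℤ^n: δ(dim L) = f_M(δ) if and only if f_{M/L}(δ) = 0 and δ(dim L) = f_L(δ). -/
/-!  Common setup: tropical F-polynomials and general presentations
for a finite-dimensional basic algebra `A` over `k`, following Fei,
"Tropical F-polynomials and general presentations".
All modules are *right* `A`-modules, encoded as left `Aᵐᵒᵖ`-modules. -/

namespace TropGP

open Module MulOpposite

section Defs

variable (k : Type) [Field k]
variable (A : Type) [Ring A] [Algebra k A]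

/-- The right regular `A`-module structure on `A` is compatible with the `k`-action. -/
instance instTowerOpA : IsScalarTower k Aᵐᵒᵖ A :=
  ⟨fun c b x => by
    rw [MulOpposite.smul_eq_mul_unop, MulOpposite.smul_eq_mul_unop, MulOpposite.unop_smul,
      Algebra.mul_smul_comm]⟩

/-- Shortcut instance: scalars of `k` commute with the right `A`-action. -/
instance (priority := 5000) instSMulCommOpK (M : Type) [AddCommGroup M] [Module k M]
    [Module Aᵐᵒᵖ M] [IsScalarTower k Aᵐᵒᵖ M] : SMulCommClass Aᵐᵒᵖ k M :=
  IsScalarTower.to_smulCommClass'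

variable {n : ℕ} (e : Fin n → A)

/-- Pairing of a weight vector with an integral (dimension) vector. -/
def pz (δ β : Fin n → ℤ) : ℤ := ∑ i, δ i * β i

/-- Pairing of an integral weight vector with a real vector. -/
def przr (δ : Fin n → ℤ) (γ : Fin n → ℝ) : ℝ := ∑ i, (δ i : ℝ) * γ i

/-- Pairing of two real vectors. -/
def prr (δ γ : Fin n → ℝ) : ℝ := ∑ i, δ i * γ i

variable (M : Type) [AddCommGroup M] [Module k M] [Module Aᵐᵒᵖ M] [IsScalarTower k Aᵐᵒᵖ M]

/-- Right multiplication by `e i`, as a `k`-linear endomorphism of a right `A`-module. -/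
noncomputable def rmul (i : Fin n) : M →ₗ[k] M where
  toFun x := op (e i) • x
  map_add' x y := smul_add _ x y
  map_smul' c x := smul_comm _ c x

/-- The dimension vector: `i ↦ dim_k (M eᵢ)`. -/
noncomputable def dimVec : Fin n → ℤ :=
  fun i => (finrank k (LinearMap.range (rmul k A e M i)) : ℤ)

/-- The real dimension vector. -/
noncomputable def dimVecR : Fin n → ℝ :=
  fun i => (finrank k (LinearMap.range (rmul k A e M i)) : ℝ)

/-- The tropical F-polynomial: `f_M(δ) = max { δ(dim L) : L ⊆ M }`. -/
noncomputable def tropF (δ : Fin n → ℤ) : ℤ :=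
  sSup (Set.range fun L : Submodule Aᵐᵒᵖ M => pz δ (dimVec k A e L))

/-- The dual tropical F-polynomial: `f̌_M(δ) = max { δ(dim N) : M ↠ N }`. -/
noncomputable def tropCheck (δ : Fin n → ℤ) : ℤ :=
  sSup (Set.range fun L : Submodule Aᵐᵒᵖ M => pz δ (dimVec k A e (M ⧸ L)))

/-- The Newton polytope of `M`: the convex hull of dimension vectors of submodules. -/
noncomputable def newton : Set (Fin n → ℝ) :=
  convexHull ℝ {x | ∃ L : Submodule Aᵐᵒᵖ M, x = dimVecR k A e L}

/-- The dual Newton polytope of `M`: convex hull of dimension vectors of quotients. -/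
noncomputable def newtonCheck : Set (Fin n → ℝ) :=
  convexHull ℝ {x | ∃ L : Submodule Aᵐᵒᵖ M, x = dimVecR k A e (M ⧸ L)}

/-- King's `δ`-semistability. -/
def IsSemistable (δ : Fin n → ℤ) : Prop :=
  pz δ (dimVec k A e M) = 0 ∧ ∀ L : Submodule Aᵐᵒᵖ M, pz δ (dimVec k A e L) ≤ 0

/-- `δ`-semistability for a real weight. -/
def IsSemistableR (δ : Fin n → ℝ) : Prop :=
  prr δ (dimVecR k A e M) = 0 ∧ ∀ L : Submodule Aᵐᵒᵖ M, prr δ (dimVecR k A e L) ≤ 0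

/-- `δ`-stability. -/
def IsStable (δ : Fin n → ℤ) : Prop :=
  pz δ (dimVec k A e M) = 0 ∧
    ∀ L : Submodule Aᵐᵒᵖ M, L ≠ ⊥ → L ≠ ⊤ → pz δ (dimVec k A e L) < 0

section HomE

variable {P Q : Type} [AddCommGroup P] [Module Aᵐᵒᵖ P] [AddCommGroup Q] [Module Aᵐᵒᵖ Q]

/-- The `k`-linear map `Hom_A(Q, M) → Hom_A(P, M)` induced by `d : P → Q`. -/
noncomputable def homMap (d : P →ₗ[Aᵐᵒᵖ] Q) : (Q →ₗ[Aᵐᵒᵖ] M) →ₗ[k] (P →ₗ[Aᵐᵒᵖ] M) where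
  toFun f := f ∘ₗ d
  map_add' f g := LinearMap.add_comp _ _ _
  map_smul' c f := LinearMap.smul_comp _ _ _

/-- `dim_k Hom(d, M)`: the kernel of the induced map. -/
noncomputable def homNum (d : P →ₗ[Aᵐᵒᵖ] Q) : ℕ :=
  finrank k (LinearMap.ker (homMap k A M d))

/-- `dim_k E(d, M)`: the cokernel of the induced map. -/
noncomputable def eNum (d : P →ₗ[Aᵐᵒᵖ] Q) : ℕ :=
  finrank k ((P →ₗ[Aᵐᵒᵖ] M) ⧸ LinearMap.range (homMap k A M d))

end HomE

/-- The indecomposable projective right module `e i · A`. -/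
abbrev projP (i : Fin n) : Submodule Aᵐᵒᵖ A := Submodule.span Aᵐᵒᵖ {e i}

/-- The projective right module `P(β) = ⊕ᵢ (eᵢA)^{β i}`. -/
abbrev PP (β : Fin n → ℕ) : Type := Π i : Fin n, Fin (β i) → projP A e i

/-- The weight condition `β₊ - β₋ = δ`. -/
def HasWt (βm βp : Fin n → ℕ) (δ : Fin n → ℤ) : Prop :=
  ∀ i, (βp i : ℤ) - (βm i : ℤ) = δ i

/-- The cokernel of a projective presentation. -/
abbrev Coker {βm βp : Fin n → ℕ} (d : PP A e βm →ₗ[Aᵐᵒᵖ] PP A e βp) : Type :=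
  PP A e βp ⧸ LinearMap.range d

/-- `hom(δ, M)`: min of `dim_k Hom(d,M)` over projective presentations `d` of weight `δ`. -/
noncomputable def homWt (δ : Fin n → ℤ) : ℕ :=
  sInf {m : ℕ | ∃ (βm βp : Fin n → ℕ) (d : PP A e βm →ₗ[Aᵐᵒᵖ] PP A e βp),
    HasWt βm βp δ ∧ m = homNum k A M d}

/-- `e(δ, M)`: min of `dim_k E(d,M)` over projective presentations `d` of weight `δ`. -/
noncomputable def eWt (δ : Fin n → ℤ) : ℕ :=
  sInf {m : ℕ | ∃ (βm βp : Fin n → ℕ) (d : PP A e βm →ₗ[Aᵐᵒᵖ] PP A e βp),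
    HasWt βm βp δ ∧ m = eNum k A M d}

/-- The indecomposable left module `A · e i`. -/
abbrev projL (i : Fin n) : Submodule A A := Submodule.span A {e i}

section DualMod

variable (V : Type) [AddCommGroup V] [Module k V] [Module A V] [IsScalarTower k A V]

/-- Left multiplication by `a` as a `k`-linear endomorphism of a left module. -/
noncomputable def lact (a : A) : V →ₗ[k] V where
  toFun x := a • x
  map_add' x y := smul_add a x y
  map_smul' c x := smul_comm a c x

/-- The right `A`-action on the `k`-dual of a left `A`-module. -/
noncomputable instance dualSMul : SMul Aᵐᵒᵖ (V →ₗ[k] k) :=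
  ⟨fun a f => f ∘ₗ lact k A V a.unop⟩

@[simp] lemma dual_smul_apply (a : Aᵐᵒᵖ) (f : V →ₗ[k] k) (x : V) :
    (a • f) x = f (a.unop • x) := rfl

/-- The `k`-dual of a left `A`-module is a right `A`-module. -/
noncomputable instance dualModule : Module Aᵐᵒᵖ (V →ₗ[k] k) :=
  { dualSMul k A V with
    one_smul := fun f => by ext x; simp
    mul_smul := fun a b f => by ext x; simp [mul_smul]
    smul_zero := fun a => by ext x; simp
    smul_add := fun a f g => by ext x; simp
    add_smul := fun a b f => by ext x; simp [add_smul]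
    zero_smul := fun f => by ext x; simp }

instance dualSMulComm : SMulCommClass Aᵐᵒᵖ k (V →ₗ[k] k) :=
  ⟨fun a c f => by ext x; simp⟩

instance dualTower : IsScalarTower k Aᵐᵒᵖ (V →ₗ[k] k) :=
  ⟨fun c a f => by ext x; simp [MulOpposite.unop_smul, smul_assoc]⟩

end DualMod

/-- The indecomposable injective right module `Iᵢ = D(A eᵢ)`,
the `k`-dual of the left module `A eᵢ`. -/
abbrev IP (i : Fin n) : Type := (projL A e i) →ₗ[k] k

/-- The injective right module `I(β) = ⊕ᵢ Iᵢ^{β i}`. -/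
abbrev IM (β : Fin n → ℕ) : Type := Π i : Fin n, Fin (β i) → IP k A e i

section PostMap

variable {I J : Type} [AddCommGroup I] [Module k I] [Module Aᵐᵒᵖ I] [IsScalarTower k Aᵐᵒᵖ I]
variable [AddCommGroup J] [Module k J] [Module Aᵐᵒᵖ J] [IsScalarTower k Aᵐᵒᵖ J]

/-- The `k`-linear map `Hom_A(M, I) → Hom_A(M, J)` induced by `dc : I → J`. -/
noncomputable def postMap (dc : I →ₗ[Aᵐᵒᵖ] J) :
    (M →ₗ[Aᵐᵒᵖ] I) →ₗ[k] (M →ₗ[Aᵐᵒᵖ] J) where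
  toFun f := dc ∘ₗ f
  map_add' f g := LinearMap.comp_add _ _ _
  map_smul' c f := by
    ext x
    simp only [LinearMap.comp_apply, LinearMap.smul_apply, RingHom.id_apply]
    rw [← algebraMap_smul Aᵐᵒᵖ c (f x), LinearMap.map_smul, algebraMap_smul]

end PostMap

/-- `hom(M, δ̌)`: min of `dim_k Hom(M, ď)` over injective presentations `ď` of weight `δ̌`. -/
noncomputable def ihomWt (δc : Fin n → ℤ) : ℕ :=
  sInf {m : ℕ | ∃ (βp βm : Fin n → ℕ) (dc : IM k A e βp →ₗ[Aᵐᵒᵖ] IM k A e βm),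
    HasWt βm βp δc ∧ m = finrank k (LinearMap.ker (postMap k A M dc))}

/-- `ě(M, δ̌)`: min of `dim_k Ě(M, ď)` over injective presentations `ď` of weight `δ̌`. -/
noncomputable def ieWt (δc : Fin n → ℤ) : ℕ :=
  sInf {m : ℕ | ∃ (βp βm : Fin n → ℕ) (dc : IM k A e βp →ₗ[Aᵐᵒᵖ] IM k A e βm),
    HasWt βm βp δc ∧
      m = finrank k (@HasQuotient.Quotient (M →ₗ[Aᵐᵒᵖ] IM k A e βm) _ Submodule.hasQuotient
        (LinearMap.range (postMap k A M dc)))}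

/-- `e(δ, δ) = 0`: there are projective presentations `d, d'` of weight `δ` with
`E(d, Coker d') = 0`, i.e. the induced map on `Hom`s is surjective. -/
def EWtSelfZero (δ : Fin n → ℤ) : Prop :=
  ∃ (βm βp : Fin n → ℕ) (d : PP A e βm →ₗ[Aᵐᵒᵖ] PP A e βp)
    (βm' βp' : Fin n → ℕ) (d' : PP A e βm' →ₗ[Aᵐᵒᵖ] PP A e βp'),
    HasWt βm βp δ ∧ HasWt βm' βp' δ ∧
      Function.Surjective (homMap k A (Coker A e d') d)

/-- `e₁, …, e_n` is a complete set of primitive orthogonal idempotents and `A` is basic: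
the indecomposable projectives `eᵢA` are pairwise non-isomorphic. -/
def IsBasicSetup : Prop :=
  (∀ i, IsIdempotentElem (e i)) ∧
  (∀ i j, i ≠ j → e i * e j = 0) ∧
  (∑ i, e i = 1) ∧
  (∀ i, e i ≠ 0 ∧ ∀ f g : A, IsIdempotentElem f → IsIdempotentElem g →
      f * g = 0 → g * f = 0 → f + g = e i → f = 0 ∨ g = 0) ∧
  (∀ i j, i ≠ j → IsEmpty (projP A e i ≃ₗ[Aᵐᵒᵖ] projP A e j))

end Defs

end TropGP

open TropGP Module MulOpposite

/-! Right multiplication by the idempotent `eᵢ` makes `X ↦ X eᵢ` an exact functor to `k`-vector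
spaces, so `dim` is additive on short exact sequences. For submodules `N, L ⊆ M` this gives
`δ(dim N) = δ(dim (N ∩ L)) + δ(dim ((N + L)/L))`. Submodules of `L` and of `M/L` are the submodules
of `M` below, resp. above, `L`; hence `δ(dim L) = f_M(δ)` bounds the weights of the former by
`δ(dim L)` and those of the latter by `0`, and conversely the splitting bounds `f_M(δ)` by
`f_L(δ) + f_{M/L}(δ)`. -/

theorem Module.finrank_eq_add_of_exact {K U V W : Type*} [DivisionRing K]
    [AddCommGroup U] [Module K U] [AddCommGroup V] [Module K V] [AddCommGroup W] [Module K W]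
    [FiniteDimensional K V] {g : U →ₗ[K] V} {f : V →ₗ[K] W}
    (hg : Function.Injective g) (hf : Function.Surjective f) (hgf : Function.Exact g f) :
    finrank K V = finrank K U + finrank K W := by
  rw [← f.finrank_range_add_finrank_ker, hgf.linearMap_ker_eq, LinearMap.finrank_range_of_inj hg,
    LinearMap.range_eq_top.2 hf, finrank_top, add_comm]

namespace TropGP

variable {k : Type} [Field k] {A : Type} [Ring A] [Algebra k A] {n : ℕ} {e : Fin n → A}
variable {X Y Z : Type}
  [AddCommGroup X] [Module k X] [Module Aᵐᵒᵖ X] [IsScalarTower k Aᵐᵒᵖ X]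
  [AddCommGroup Y] [Module k Y] [Module Aᵐᵒᵖ Y] [IsScalarTower k Aᵐᵒᵖ Y]
  [AddCommGroup Z] [Module k Z] [Module Aᵐᵒᵖ Z] [IsScalarTower k Aᵐᵒᵖ Z]

lemma pz_add (δ β γ : Fin n → ℤ) : pz δ (β + γ) = pz δ β + pz δ γ :=
  dotProduct_add δ β γ

lemma map_mem_range_rmul (g : X →ₗ[Aᵐᵒᵖ] Y) (i : Fin n) {x : X}
    (hx : x ∈ LinearMap.range (rmul k A e X i)) : g x ∈ LinearMap.range (rmul k A e Y i) := by
  obtain ⟨x, rfl⟩ := hx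
  exact ⟨g x, (g.map_smul _ x).symm⟩

variable (k A e) in
noncomputable def rmulRangeMap (g : X →ₗ[Aᵐᵒᵖ] Y) (i : Fin n) :
    LinearMap.range (rmul k A e X i) →ₗ[k] LinearMap.range (rmul k A e Y i) :=
  (g.restrictScalars k).restrict fun _ hx => map_mem_range_rmul g i hx

lemma rmulRangeMap_injective {g : X →ₗ[Aᵐᵒᵖ] Y} (hg : Function.Injective g) (i : Fin n) :
    Function.Injective (rmulRangeMap k A e g i) :=
  fun _ _ h => Subtype.ext (hg (congrArg Subtype.val h))

lemma rmulRangeMap_surjective {f : X →ₗ[Aᵐᵒᵖ] Y} (hf : Function.Surjective f) (i : Fin n) :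
    Function.Surjective (rmulRangeMap k A e f i) := by
  rintro ⟨_, y, rfl⟩
  obtain ⟨x, rfl⟩ := hf y
  exact ⟨⟨_, x, rfl⟩, Subtype.ext (f.map_smul _ x)⟩

lemma rmulRangeMap_exact {i : Fin n} (he : IsIdempotentElem (e i)) {g : X →ₗ[Aᵐᵒᵖ] Y}
    {f : Y →ₗ[Aᵐᵒᵖ] Z} (hgf : Function.Exact g f) :
    Function.Exact (rmulRangeMap k A e g i) (rmulRangeMap k A e f i) := by
  rintro ⟨_, y, rfl⟩
  constructor
  · intro h
    -- `op (e i) • y = g x` is fixed by `eᵢ`, so it is also `g (op (e i) • x)`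
    obtain ⟨x, hx⟩ := (hgf _).1 (congrArg Subtype.val h)
    replace hx : g x = op (e i) • y := hx
    refine ⟨⟨_, x, rfl⟩, Subtype.ext ?_⟩
    show g (op (e i) • x) = op (e i) • y
    rw [g.map_smul, hx, smul_smul, ← op_mul, he.eq]
  · rintro ⟨⟨_, x, rfl⟩, hx⟩
    replace hx : g (op (e i) • x) = op (e i) • y := congrArg Subtype.val hx
    refine Subtype.ext ?_
    show f (op (e i) • y) = 0
    rw [← hx]
    exact hgf.apply_apply_eq_zero _

theorem dimVec_eq_add_of_exact (he : ∀ i, IsIdempotentElem (e i)) [FiniteDimensional k Y]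
    {g : X →ₗ[Aᵐᵒᵖ] Y} {f : Y →ₗ[Aᵐᵒᵖ] Z} (hg : Function.Injective g)
    (hf : Function.Surjective f) (hgf : Function.Exact g f) :
    dimVec k A e Y = dimVec k A e X + dimVec k A e Z := by
  funext i
  simp only [dimVec, Pi.add_apply]
  exact_mod_cast finrank_eq_add_of_exact (rmulRangeMap_injective hg i)
    (rmulRangeMap_surjective hf i) (rmulRangeMap_exact (he i) hgf)

lemma dimVec_eq_of_equiv (φ : X ≃ₗ[Aᵐᵒᵖ] Y) : dimVec k A e X = dimVec k A e Y := by
  funext i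
  simp only [dimVec]
  rw [(LinearEquiv.ofBijective (rmulRangeMap k A e (φ : X →ₗ[Aᵐᵒᵖ] Y) i)
    ⟨rmulRangeMap_injective φ.injective i, rmulRangeMap_surjective φ.surjective i⟩).finrank_eq]

lemma dimVec_bot : dimVec k A e (⊥ : Submodule Aᵐᵒᵖ X) = 0 := by
  funext i
  exact congrArg Nat.cast finrank_zero_of_subsingleton

variable {M : Type} [AddCommGroup M] [Module k M] [Module Aᵐᵒᵖ M] [IsScalarTower k Aᵐᵒᵖ M]

instance [FiniteDimensional k M] (N : Submodule Aᵐᵒᵖ M) : FiniteDimensional k N :=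
  FiniteDimensional.finiteDimensional_submodule (N.restrictScalars k)

lemma dimVec_le_finrank [FiniteDimensional k M] (N : Submodule Aᵐᵒᵖ M) (i : Fin n) :
    dimVec k A e N i ≤ finrank k M := by
  have hN : finrank k N ≤ finrank k M := Submodule.finrank_le (N.restrictScalars k)
  have hNi : finrank k (LinearMap.range (rmul k A e N i)) ≤ finrank k N := Submodule.finrank_le _
  simp only [dimVec]
  exact_mod_cast hNi.trans hN

lemma bddAbove_pz_dimVec [FiniteDimensional k M] (δ : Fin n → ℤ) :
    BddAbove (Set.range fun N : Submodule Aᵐᵒᵖ M => pz δ (dimVec k A e N)) := by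
  refine ⟨∑ i, |δ i| * finrank k M, ?_⟩
  rintro _ ⟨N, rfl⟩
  refine Finset.sum_le_sum fun i _ => ?_
  calc δ i * dimVec k A e N i ≤ |δ i| * dimVec k A e N i :=
        mul_le_mul_of_nonneg_right (le_abs_self _) (Int.natCast_nonneg _)
    _ ≤ |δ i| * finrank k M := mul_le_mul_of_nonneg_left (dimVec_le_finrank N i) (abs_nonneg _)

lemma pz_dimVec_le_tropF [FiniteDimensional k M] (δ : Fin n → ℤ) (N : Submodule Aᵐᵒᵖ M) :
    pz δ (dimVec k A e N) ≤ tropF k A e M δ :=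
  le_csSup (bddAbove_pz_dimVec δ) ⟨N, rfl⟩

lemma tropF_le {δ : Fin n → ℤ} {c : ℤ} (h : ∀ N : Submodule Aᵐᵒᵖ M, pz δ (dimVec k A e N) ≤ c) :
    tropF k A e M δ ≤ c :=
  csSup_le (Set.range_nonempty _) (Set.forall_mem_range.2 h)

lemma tropF_nonneg [FiniteDimensional k M] (δ : Fin n → ℤ) : 0 ≤ tropF k A e M δ := by
  simpa only [dimVec_bot, pz, Pi.zero_apply, mul_zero, Finset.sum_const_zero] using
    pz_dimVec_le_tropF (k := k) (e := e) δ (⊥ : Submodule Aᵐᵒᵖ M)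

lemma pz_dimVec_le_tropF_of_le [FiniteDimensional k M] {N L : Submodule Aᵐᵒᵖ M} (h : N ≤ L)
    (δ : Fin n → ℤ) : pz δ (dimVec k A e N) ≤ tropF k A e L δ := by
  rw [← dimVec_eq_of_equiv (X := N.comap L.subtype) (Submodule.comapSubtypeEquivOfLe h)]
  exact pz_dimVec_le_tropF δ _

lemma dimVec_map_subtype (L : Submodule Aᵐᵒᵖ M) (N : Submodule Aᵐᵒᵖ L) :
    dimVec k A e (N.map L.subtype) = dimVec k A e N :=
  (dimVec_eq_of_equiv (Submodule.equivSubtypeMap L N)).symm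

theorem dimVec_eq_dimVec_inf_add_dimVec_map_mkQ (he : ∀ i, IsIdempotentElem (e i))
    [FiniteDimensional k M] (N L : Submodule Aᵐᵒᵖ M) :
    dimVec k A e N = dimVec k A e ↥(N ⊓ L) + dimVec k A e ↥(N.map L.mkQ) := by
  refine dimVec_eq_add_of_exact he (Submodule.inclusion_injective inf_le_left)
    (L.mkQ.submoduleMap_surjective N) ?_
  rintro ⟨x, hx⟩
  simp [Subtype.ext_iff, Submodule.Quotient.mk_eq_zero, hx]

lemma dimVec_comap_mkQ (he : ∀ i, IsIdempotentElem (e i)) [FiniteDimensional k M]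
    (L : Submodule Aᵐᵒᵖ M) (N : Submodule Aᵐᵒᵖ (M ⧸ L)) :
    dimVec k A e (N.comap L.mkQ) = dimVec k A e L + dimVec k A e N := by
  rw [dimVec_eq_dimVec_inf_add_dimVec_map_mkQ he _ L, inf_eq_right.2 (L.le_comap_mkQ N),
    Submodule.map_comap_eq_of_surjective L.mkQ_surjective]

end TropGP

theorem statement10_general (k : Type) [Field k]
    (A : Type) [Ring A] [Algebra k A]
    {n : ℕ} (e : Fin n → A) (hA : IsBasicSetup A e)
    (M : Type) [AddCommGroup M] [Module k M] [Module Aᵐᵒᵖ M]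
    [IsScalarTower k Aᵐᵒᵖ M] [FiniteDimensional k M]
    (L : Submodule Aᵐᵒᵖ M) (δ : Fin n → ℤ) :
    pz δ (dimVec k A e L) = tropF k A e M δ ↔
      tropF k A e (M ⧸ L) δ = 0 ∧ pz δ (dimVec k A e L) = tropF k A e L δ := by
  have he := hA.1
  constructor
  · intro hL
    refine ⟨le_antisymm (tropF_le fun N => ?_) (tropF_nonneg (k := k) δ),
      le_antisymm (pz_dimVec_le_tropF_of_le le_rfl δ) (tropF_le fun N => ?_)⟩
    · have hN := pz_dimVec_le_tropF (k := k) (e := e) δ (N.comap L.mkQ)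
      rw [dimVec_comap_mkQ he, pz_add, ← hL] at hN
      linarith
    · rw [← dimVec_map_subtype, hL]
      exact pz_dimVec_le_tropF δ _
  · rintro ⟨hQ, hL⟩
    refine le_antisymm (pz_dimVec_le_tropF δ L) (tropF_le fun N => ?_)
    have hNL := pz_dimVec_le_tropF_of_le (k := k) (e := e) (inf_le_right : N ⊓ L ≤ L) δ
    have hNQ := pz_dimVec_le_tropF (k := k) (e := e) δ (N.map L.mkQ)
    rw [dimVec_eq_dimVec_inf_add_dimVec_map_mkQ he N L, pz_add]
    linarith

/-- For every submodule `L ⊆ M` and `δ ∈ ℤⁿ`: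
`δ(dim L) = f_M(δ)` iff `f_{M/L}(δ) = 0` and `δ(dim L) = f_L(δ)`. -/
theorem statement10 (k : Type) [Field k] [IsAlgClosed k] [CharZero k]
    (A : Type) [Ring A] [Algebra k A] [FiniteDimensional k A]
    {n : ℕ} (e : Fin n → A) (hA : IsBasicSetup A e)
    (M : Type) [AddCommGroup M] [Module k M] [Module Aᵐᵒᵖ M]
    [IsScalarTower k Aᵐᵒᵖ M] [FiniteDimensional k M]
    (L : Submodule Aᵐᵒᵖ M) (δ : Fin n → ℤ) :
    pz δ (dimVec k A e L) = tropF k A e M δ ↔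
      tropF k A e (M ⧸ L) δ = 0 ∧ pz δ (dimVec k A e L) = tropF k A e L δ :=
  statement10_general k A e hA M L δ
end

section
/- Let d₀, d₋, d₊ be projective presentations of finitely generated projective right A-modules such that: E(d₀ ⊕ d₊, Coker(d₀ ⊕ d₊)) = 0; E(d₋, Coker d₀) = 0; E(d₋, Coker d₋) = 0; and dim_k E(d₋, Coker d₊) = 1. Set L := Coker d₊ and N^τ := ker ν(d₋). Then dim_k Hom_A(L, N^τ) = 1, and the image I of a nonzero homomorphism L → N^τ satisfies: Hom_A(Coker d₀, I) = 0 and E(d₀, I) = 0; dim_k Hom_A(Coker d₊, I) = 1 and E(d₊, I) = 0; Hom_A(Coker d₋, I) = 0 and dim_k E(d₋, I) = 1. Moreover End_A(I) = k and Ext¹_A(I, I) = 0 (I is real Schur). -/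
open TropGP Module MulOpposite

section Nakayama

variable (k : Type) [Field k] (A : Type) [Ring A] [Algebra k A]

/-- The Nakayama functor on objects: `ν(P) = Hom_A(P, A)^*`, a right `A`-module
(the right `A`-module structure on the `k`-dual of the left module `Hom_A(P,A)`
is the instance `TropGP.dualModule`). -/
abbrev Nu (P : Type) [AddCommGroup P] [Module Aᵐᵒᵖ P] : Type :=
  (P →ₗ[Aᵐᵒᵖ] A) →ₗ[k] k

variable {P Q : Type} [AddCommGroup P] [Module Aᵐᵒᵖ P] [AddCommGroup Q] [Module Aᵐᵒᵖ Q]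

/-- The Nakayama functor on morphisms: `ν(d) : ν(P) → ν(Q)` for `d : P → Q`. -/
noncomputable def nuMap (d : P →ₗ[Aᵐᵒᵖ] Q) : Nu k A P →ₗ[Aᵐᵒᵖ] Nu k A Q where
  toFun φ := φ ∘ₗ homMap k A A d
  map_add' φ ψ := LinearMap.add_comp _ _ _
  map_smul' a φ := rfl

end Nakayama

/-- `Ext¹_A(L, L) = 0`: every self-extension `0 → L → E → L → 0` splits. -/
def Ext1SelfVanishes (A : Type) [Ring A] (L : Type) [AddCommGroup L] [Module Aᵐᵒᵖ L] : Prop :=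
  ∀ (E : Type) (igE : AddCommGroup E), letI := igE;
  ∀ (imE : Module Aᵐᵒᵖ E), letI := imE;
  ∀ (ι : L →ₗ[Aᵐᵒᵖ] E) (π : E →ₗ[Aᵐᵒᵖ] L),
    Function.Injective ι → Function.Surjective π → LinearMap.range ι = LinearMap.ker π →
    ∃ σ : L →ₗ[Aᵐᵒᵖ] E, π ∘ₗ σ = LinearMap.id

/-! The engine is the Auslander–Reiten formula for presentations,
`dim Hom(N, ker ν(d)) = dim E(d, N)`, which comes from the natural isomorphism
`D Hom_A(P, N) ≅ Hom_A(N, ν P)` for finitely generated projective `P`. For `d = d₋` it gives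
`dim Hom(L, N^τ) = 1` and turns `E(d₋, C) = 0` into `Hom(C, N^τ) = 0`, hence `Hom(C, I) = 0`, for
`C = Coker d₀, Coker d₋`. Rigidity of `d₀ ⊕ d₊` passes to its quotients `L` and `I`. As
`L ↠ I ↪ N^τ` and `Hom(L, N^τ)` is a line, so are `Hom(L, I)`, `Hom(I, N^τ)` and `End(I)`.
For `Ext¹(I, I) = 0`: by `E(d₊, I) = 0` the map `L ↠ I` lifts to any self-extension of `I`; the
lift kills `K = ker(L ↠ I)` because `E(d₋, L) ≅ E(d₋, I)` forces `E(d₋, K) = 0`, i.e.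
`Hom(K, N^τ) = 0`, so it descends to a section. -/

open Function

section Tower

variable (k : Type) [Field k] (A : Type) [Ring A] [Algebra k A]
variable {M N : Type}
  [AddCommGroup M] [Module k M] [Module Aᵐᵒᵖ M] [IsScalarTower k Aᵐᵒᵖ M]
  [AddCommGroup N] [Module k N] [Module Aᵐᵒᵖ N] [IsScalarTower k Aᵐᵒᵖ N]

lemma finiteDimensional_of_injective_of_tower [FiniteDimensional k N] (f : M →ₗ[Aᵐᵒᵖ] N)
    (hf : Injective f) : FiniteDimensional k M :=
  FiniteDimensional.of_injective (f.restrictScalars k) hf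

instance finiteDimensional_submodule_of_tower [FiniteDimensional k M] (p : Submodule Aᵐᵒᵖ M) :
    FiniteDimensional k p :=
  finiteDimensional_of_injective_of_tower k A p.subtype Subtype.val_injective

lemma postMap_injective {X : Type} [AddCommGroup X] [Module Aᵐᵒᵖ X] {f : M →ₗ[Aᵐᵒᵖ] N}
    (hf : Injective f) : Injective (postMap k A X f) :=
  fun _ _ h => (LinearMap.cancel_left hf).mp h

lemma homMap_injective {X Y : Type} [AddCommGroup X] [Module Aᵐᵒᵖ X] [AddCommGroup Y]
    [Module Aᵐᵒᵖ Y] {f : X →ₗ[Aᵐᵒᵖ] Y} (hf : Surjective f) : Injective (homMap k A M f) :=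
  fun _ _ h => (LinearMap.cancel_right hf).mp h

end Tower

section FieldLemmas

variable {k V W : Type} [Field k] [AddCommGroup V] [Module k V] [AddCommGroup W] [Module k W]

lemma finrank_eq_one_of_injective [Nontrivial V] {f : V →ₗ[k] W} (hf : Injective f)
    (hW : finrank k W = 1) : finrank k V = 1 := by
  have : FiniteDimensional k W := Module.finite_of_finrank_eq_succ hW
  have : FiniteDimensional k V := FiniteDimensional.of_injective f hf
  have := LinearMap.finrank_le_finrank_of_injective hf
  have := Module.finrank_pos (R := k) (M := V)
  omega

lemma finrank_ker_dualMap (f : V →ₗ[k] W) :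
    finrank k (LinearMap.ker f.dualMap) = finrank k (W ⧸ LinearMap.range f) := by
  rw [LinearMap.ker_dualMap_eq_dualAnnihilator_range,
    ← (Submodule.dualQuotEquivDualAnnihilator _).finrank_eq, Subspace.dual_finrank_eq]

lemma finrank_ker_eq_of_comp_eq {V' W' : Type} [AddCommGroup V'] [Module k V'] [AddCommGroup W']
    [Module k W'] (a : V →ₗ[k] W) (b : V' →ₗ[k] W') (e₁ : V ≃ₗ[k] V') (e₂ : W ≃ₗ[k] W')
    (h : b ∘ₗ e₁.toLinearMap = e₂.toLinearMap ∘ₗ a) :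
    finrank k (LinearMap.ker a) = finrank k (LinearMap.ker b) := by
  have hb : b = e₂.toLinearMap ∘ₗ a ∘ₗ e₁.symm.toLinearMap := by
    rw [← LinearMap.comp_assoc, ← h, LinearMap.comp_assoc, e₁.comp_symm, LinearMap.comp_id]
  rw [hb, LinearEquiv.ker_comp, LinearMap.ker_comp, Submodule.comap_equiv_eq_map_symm,
    e₁.symm_symm, e₁.finrank_map_eq]

end FieldLemmas

/-- By the dual basis lemma, a right `A`-module admits a finite dual basis exactly when it is
finitely generated projective. -/
structure FiniteDualBasis (A : Type) [Ring A] (P : Type) [AddCommGroup P] [Module Aᵐᵒᵖ P] where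
  ι : Type
  [fintype : Fintype ι]
  vec : ι → P
  coord : ι → P →ₗ[Aᵐᵒᵖ] A
  sum_coord_smul_vec : ∀ p, ∑ j, op (coord j p) • vec j = p

attribute [instance] FiniteDualBasis.fintype

section DualBasis

variable (A : Type) [Ring A] {P N M : Type} [AddCommGroup P] [Module Aᵐᵒᵖ P]
  [AddCommGroup N] [Module Aᵐᵒᵖ N] [AddCommGroup M] [Module Aᵐᵒᵖ M]

noncomputable def opSmulRight (φ : P →ₗ[Aᵐᵒᵖ] A) (y : N) : P →ₗ[Aᵐᵒᵖ] N where
  toFun p := op (φ p) • y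
  map_add' p q := by simp only [map_add, op_add, add_smul]
  map_smul' a p := by
    simp only [map_smul, MulOpposite.smul_eq_mul_unop, op_mul, op_unop, mul_smul, RingHom.id_apply]

@[simp] lemma opSmulRight_apply (φ : P →ₗ[Aᵐᵒᵖ] A) (y : N) (p : P) :
    opSmulRight A φ y p = op (φ p) • y := rfl

namespace FiniteDualBasis

variable {A}

lemma sum_coord_smul_apply_vec (b : FiniteDualBasis A P) (g : P →ₗ[Aᵐᵒᵖ] N) (p : P) :
    ∑ j, op (b.coord j p) • g (b.vec j) = g p := by
  conv_rhs => rw [← b.sum_coord_smul_vec p]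
  simp only [map_sum, map_smul]

lemma sum_opSmulRight (b : FiniteDualBasis A P) (g : P →ₗ[Aᵐᵒᵖ] N) :
    ∑ j, opSmulRight A (b.coord j) (g (b.vec j)) = g :=
  LinearMap.ext fun p => by
    simp only [LinearMap.sum_apply, opSmulRight_apply, b.sum_coord_smul_apply_vec]

lemma sum_apply_vec_smul_coord (b : FiniteDualBasis A P) (φ : P →ₗ[Aᵐᵒᵖ] A) :
    ∑ j, φ (b.vec j) • b.coord j = φ :=
  LinearMap.ext fun p => by
    simpa only [LinearMap.sum_apply, LinearMap.smul_apply, smul_eq_mul,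
      MulOpposite.smul_eq_mul_unop, unop_op] using b.sum_coord_smul_apply_vec φ p

lemma exists_comp_eq (b : FiniteDualBasis A P) (q : M →ₗ[Aᵐᵒᵖ] N) (hq : Surjective q)
    (f : P →ₗ[Aᵐᵒᵖ] N) : ∃ g : P →ₗ[Aᵐᵒᵖ] M, q ∘ₗ g = f := by
  choose y hy using fun j => hq (f (b.vec j))
  refine ⟨∑ j, opSmulRight A (b.coord j) (y j), LinearMap.ext fun p => ?_⟩
  simp only [LinearMap.comp_apply, LinearMap.sum_apply, map_sum,
    opSmulRight_apply, map_smul, hy, b.sum_coord_smul_apply_vec]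

end FiniteDualBasis

end DualBasis

section Projectives

variable (A : Type) [Ring A] {n : ℕ} (e : Fin n → A)

lemma mul_eq_self_of_mem_projP {i : Fin n} (hid : IsIdempotentElem (e i)) {a : A}
    (ha : a ∈ projP A e i) : e i * a = a := by
  obtain ⟨c, rfl⟩ := Submodule.mem_span_singleton.mp ha
  rw [MulOpposite.smul_eq_mul_unop, ← mul_assoc, hid.eq]

noncomputable def ppDualBasis (hid : ∀ i, IsIdempotentElem (e i)) (β : Fin n → ℕ) :
    FiniteDualBasis A (PP A e β) where
  ι := Σ i, Fin (β i)
  vec j := Pi.single j.1 (Pi.single j.2 ⟨e j.1, Submodule.subset_span rfl⟩)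
  coord j := (projP A e j.1).subtype ∘ₗ LinearMap.proj j.2 ∘ₗ LinearMap.proj j.1
  sum_coord_smul_vec p := by
    funext i t
    refine Subtype.ext ?_
    simp only [Finset.sum_apply, Fintype.sum_sigma, Pi.smul_apply, Submodule.coe_sum,
      SetLike.val_smul, LinearMap.comp_apply, LinearMap.proj_apply, Submodule.subtype_apply,
      MulOpposite.smul_eq_mul_unop, unop_op]
    rw [Fintype.sum_eq_single i fun x hx => by simp [Pi.single_eq_of_ne' hx],
      Fintype.sum_eq_single t fun x hx => by simp [Pi.single_eq_of_ne' hx]]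
    simpa using mul_eq_self_of_mem_projP A e (hid i) (p i t).2

end Projectives

section Duality

variable (k : Type) [Field k] (A : Type) [Ring A] [Algebra k A]
variable {P Q N : Type} [AddCommGroup P] [Module Aᵐᵒᵖ P] [AddCommGroup Q] [Module Aᵐᵒᵖ Q]
  [AddCommGroup N] [Module k N] [Module Aᵐᵒᵖ N] [IsScalarTower k Aᵐᵒᵖ N]

noncomputable def nuOfDual : Module.Dual k (P →ₗ[Aᵐᵒᵖ] N) →ₗ[k] (N →ₗ[Aᵐᵒᵖ] Nu k A P) where
  toFun l :=
    { toFun x :=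
        { toFun φ := l (opSmulRight A φ x)
          map_add' φ ψ := by
            rw [← map_add]
            congr 1
            ext p
            simp [add_smul]
          map_smul' c φ := by
            rw [← map_smul]
            congr 1
            ext p
            simp [op_smul, smul_assoc] }
      map_add' x y := by
        ext φ
        simp only [LinearMap.add_apply, LinearMap.coe_mk, AddHom.coe_mk, ← map_add]
        congr 1
        ext p
        simp
      map_smul' a x := by
        ext φ
        simp only [LinearMap.coe_mk, AddHom.coe_mk, dual_smul_apply, RingHom.id_apply]
        congr 1
        ext p
        simp [mul_smul] }
  map_add' l l' := rfl
  map_smul' c l := rfl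

@[simp] lemma nuOfDual_apply (l : Module.Dual k (P →ₗ[Aᵐᵒᵖ] N)) (x : N) (φ : P →ₗ[Aᵐᵒᵖ] A) :
    nuOfDual k A l x φ = l (opSmulRight A φ x) := rfl

lemma postMap_nuMap_comp_nuOfDual (d : P →ₗ[Aᵐᵒᵖ] Q) :
    postMap k A N (nuMap k A d) ∘ₗ nuOfDual k A = nuOfDual k A ∘ₗ (homMap k A N d).dualMap :=
  rfl

lemma nuOfDual_bijective (b : FiniteDualBasis A P) :
    Bijective (nuOfDual k A (P := P) (N := N)) := by
  refine ⟨fun l l' h => ?_, fun h => ?_⟩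
  · ext g
    rw [← b.sum_opSmulRight g, map_sum, map_sum]
    exact Finset.sum_congr rfl fun j _ =>
      LinearMap.congr_fun (LinearMap.congr_fun h (g (b.vec j))) (b.coord j)
  · refine ⟨∑ j, Module.Dual.eval k _ (b.coord j) ∘ₗ h.restrictScalars k ∘ₗ
      LinearMap.applyₗ' k (b.vec j), ?_⟩
    ext x φ
    simp only [map_sum, LinearMap.coe_sum, Finset.sum_apply, nuOfDual_apply, LinearMap.coe_comp,
      LinearMap.coe_restrictScalars, comp_apply, LinearMap.applyₗ'_apply_apply, opSmulRight_apply,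
      map_smul, Dual.eval_apply, dual_smul_apply, unop_op]
    rw [← map_sum, b.sum_apply_vec_smul_coord]

noncomputable def nuEquiv (b : FiniteDualBasis A P) :
    Module.Dual k (P →ₗ[Aᵐᵒᵖ] N) ≃ₗ[k] (N →ₗ[Aᵐᵒᵖ] Nu k A P) :=
  LinearEquiv.ofBijective _ (nuOfDual_bijective k A b)

end Duality

section Kernels

variable (k : Type) [Field k] (A : Type) [Ring A] [Algebra k A]

lemma exists_comp_eq_of_range_le {X Y Z : Type} [AddCommGroup X] [Module Aᵐᵒᵖ X]
    [AddCommGroup Y] [Module Aᵐᵒᵖ Y] [AddCommGroup Z] [Module Aᵐᵒᵖ Z]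
    {j : Z →ₗ[Aᵐᵒᵖ] Y} (hj : Injective j) {f : X →ₗ[Aᵐᵒᵖ] Y}
    (hf : LinearMap.range f ≤ LinearMap.range j) : ∃ v : X →ₗ[Aᵐᵒᵖ] Z, j ∘ₗ v = f :=
  ⟨(LinearEquiv.ofInjective j hj).symm.toLinearMap ∘ₗ
      f.codRestrict _ fun x => hf (LinearMap.mem_range_self f x),
    LinearMap.ext fun _ => LinearEquiv.ofInjective_symm_apply (h := hj) j _⟩

lemma finrank_hom_eq_finrank_ker_postMap {N K M M' : Type} [AddCommGroup N] [Module Aᵐᵒᵖ N]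
    [AddCommGroup K] [Module k K] [Module Aᵐᵒᵖ K] [IsScalarTower k Aᵐᵒᵖ K]
    [AddCommGroup M] [Module k M] [Module Aᵐᵒᵖ M] [IsScalarTower k Aᵐᵒᵖ M]
    [AddCommGroup M'] [Module k M'] [Module Aᵐᵒᵖ M'] [IsScalarTower k Aᵐᵒᵖ M']
    {ι : K →ₗ[Aᵐᵒᵖ] M} (hι : Injective ι) {f : M →ₗ[Aᵐᵒᵖ] M'}
    (hιf : LinearMap.range ι = LinearMap.ker f) :
    finrank k (N →ₗ[Aᵐᵒᵖ] K) = finrank k (LinearMap.ker (postMap k A N f)) := by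
  have hrange : LinearMap.range (postMap k A N ι) = LinearMap.ker (postMap k A N f) := by
    ext h
    refine ⟨?_, fun hh => ?_⟩
    · rintro ⟨h, rfl⟩
      refine LinearMap.mem_ker.mpr (LinearMap.ext fun x => ?_)
      exact hιf.le (LinearMap.mem_range_self ι (h x))
    · refine exists_comp_eq_of_range_le A hι ?_
      rintro _ ⟨x, rfl⟩
      rw [hιf]
      exact LinearMap.congr_fun (LinearMap.mem_ker.mp hh) x
  rw [← hrange, LinearMap.finrank_range_of_inj (postMap_injective k A hι)]

end Kernels

section AuslanderReiten

variable (k : Type) [Field k] (A : Type) [Ring A] [Algebra k A]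
variable {P Q Nτ : Type} [AddCommGroup P] [Module Aᵐᵒᵖ P] [AddCommGroup Q] [Module Aᵐᵒᵖ Q]
  [AddCommGroup Nτ] [Module k Nτ] [Module Aᵐᵒᵖ Nτ] [IsScalarTower k Aᵐᵒᵖ Nτ]

/-- The Auslander–Reiten formula for presentations: `dim Hom_A(N, ker ν(d)) = dim E(d, N)`.
Applying `Hom_A(N, -)` to `ν(d)` is, up to the natural isomorphisms `nuEquiv`, the `k`-dual of
`Hom(d, N)`, whose kernel is dual to the cokernel `E(d, N)`. -/
theorem finrank_hom_eq_eNum (bP : FiniteDualBasis A P) (bQ : FiniteDualBasis A Q)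
    (d : P →ₗ[Aᵐᵒᵖ] Q) {ιτ : Nτ →ₗ[Aᵐᵒᵖ] Nu k A P} (hιτ : Injective ιτ)
    (hrange : LinearMap.range ιτ = LinearMap.ker (nuMap k A d))
    (N : Type) [AddCommGroup N] [Module k N] [Module Aᵐᵒᵖ N] [IsScalarTower k Aᵐᵒᵖ N] :
    finrank k (N →ₗ[Aᵐᵒᵖ] Nτ) = eNum k A N d := by
  rw [finrank_hom_eq_finrank_ker_postMap k A hιτ hrange,
    ← finrank_ker_eq_of_comp_eq (homMap k A N d).dualMap (postMap k A N (nuMap k A d))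
      (nuEquiv k A bP) (nuEquiv k A bQ) (postMap_nuMap_comp_nuOfDual k A d),
    finrank_ker_dualMap]
  rfl

end AuslanderReiten

section Presentations

variable (k : Type) [Field k] (A : Type) [Ring A] [Algebra k A]
variable {P Q : Type} [AddCommGroup P] [Module Aᵐᵒᵖ P] [AddCommGroup Q] [Module Aᵐᵒᵖ Q]
variable {M N : Type}
  [AddCommGroup M] [Module k M] [Module Aᵐᵒᵖ M] [IsScalarTower k Aᵐᵒᵖ M]
  [AddCommGroup N] [Module k N] [Module Aᵐᵒᵖ N] [IsScalarTower k Aᵐᵒᵖ N]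

lemma eNum_eq_zero_of_surjective {d : P →ₗ[Aᵐᵒᵖ] Q} (hd : Surjective (homMap k A M d)) :
    eNum k A M d = 0 := by
  have := Submodule.Quotient.subsingleton_iff.mpr (LinearMap.range_eq_top.mpr hd)
  exact finrank_zero_of_subsingleton

lemma surjective_homMap_of_surjective (b : FiniteDualBasis A P) (d : P →ₗ[Aᵐᵒᵖ] Q)
    {f : M →ₗ[Aᵐᵒᵖ] N} (hf : Surjective f) (hd : Surjective (homMap k A M d)) :
    Surjective (homMap k A N d) := by
  intro g
  obtain ⟨g', rfl⟩ := b.exists_comp_eq f hf g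
  obtain ⟨h, rfl⟩ := hd g'
  exact ⟨f ∘ₗ h, rfl⟩

lemma surjective_homMap_of_retract {P' Q' : Type} [AddCommGroup P'] [Module Aᵐᵒᵖ P']
    [AddCommGroup Q'] [Module Aᵐᵒᵖ Q'] {d : P →ₗ[Aᵐᵒᵖ] Q} {D : P' →ₗ[Aᵐᵒᵖ] Q'}
    {i : P →ₗ[Aᵐᵒᵖ] P'} {r : P' →ₗ[Aᵐᵒᵖ] P} {j : Q →ₗ[Aᵐᵒᵖ] Q'}
    (hri : r ∘ₗ i = LinearMap.id) (hD : D ∘ₗ i = j ∘ₗ d) (h : Surjective (homMap k A M D)) :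
    Surjective (homMap k A M d) := by
  intro f
  obtain ⟨G, hG⟩ := h (f ∘ₗ r)
  refine ⟨G ∘ₗ j, ?_⟩
  change (G ∘ₗ j) ∘ₗ d = f
  rw [LinearMap.comp_assoc, ← hD, ← LinearMap.comp_assoc]
  change homMap k A M D G ∘ₗ i = f
  rw [hG, LinearMap.comp_assoc, hri, LinearMap.comp_id]

/-- `d` and `d'` are retracts of `d ⊕ d'`, and `Coker d'` is a quotient of `Coker (d ⊕ d')`. -/
lemma surjective_homMap_coker_of_prodMap {P' Q Q' : Type} [AddCommGroup P'] [Module Aᵐᵒᵖ P']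
    [AddCommGroup Q] [Module k Q] [Module Aᵐᵒᵖ Q] [IsScalarTower k Aᵐᵒᵖ Q]
    [AddCommGroup Q'] [Module k Q'] [Module Aᵐᵒᵖ Q'] [IsScalarTower k Aᵐᵒᵖ Q']
    (b : FiniteDualBasis A P) (b' : FiniteDualBasis A P')
    (d : P →ₗ[Aᵐᵒᵖ] Q) (d' : P' →ₗ[Aᵐᵒᵖ] Q')
    (h : Surjective (homMap k A ((Q × Q') ⧸ LinearMap.range (d.prodMap d')) (d.prodMap d'))) :
    Surjective (homMap k A (Q' ⧸ LinearMap.range d') d) ∧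
      Surjective (homMap k A (Q' ⧸ LinearMap.range d') d') := by
  let ρ := Submodule.mapQ (LinearMap.range (d.prodMap d')) (LinearMap.range d')
    (LinearMap.snd Aᵐᵒᵖ Q Q') (by rintro _ ⟨x, rfl⟩; exact ⟨x.2, rfl⟩)
  have hρ : Surjective ρ := by
    intro y
    obtain ⟨y, rfl⟩ := Submodule.mkQ_surjective _ y
    exact ⟨Submodule.Quotient.mk (0, y), rfl⟩
  exact ⟨surjective_homMap_of_surjective k A b d hρ <| surjective_homMap_of_retract k A
      (i := LinearMap.inl Aᵐᵒᵖ P P') (j := LinearMap.inl Aᵐᵒᵖ Q Q')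
      (LinearMap.fst_comp_inl _ _ _) (by ext <;> simp) h,
    surjective_homMap_of_surjective k A b' d' hρ <| surjective_homMap_of_retract k A
      (i := LinearMap.inr Aᵐᵒᵖ P P') (j := LinearMap.inr Aᵐᵒᵖ Q Q')
      (LinearMap.snd_comp_inr _ _ _) (by ext <;> simp) h⟩

noncomputable def eMap (d : P →ₗ[Aᵐᵒᵖ] Q) (f : M →ₗ[Aᵐᵒᵖ] N) :
    ((P →ₗ[Aᵐᵒᵖ] M) ⧸ LinearMap.range (homMap k A M d)) →ₗ[k]
      ((P →ₗ[Aᵐᵒᵖ] N) ⧸ LinearMap.range (homMap k A N d)) :=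
  Submodule.mapQ _ _ (postMap k A P f) (by rintro _ ⟨g, rfl⟩; exact ⟨f ∘ₗ g, rfl⟩)

lemma eMap_surjective (b : FiniteDualBasis A P) (d : P →ₗ[Aᵐᵒᵖ] Q) {f : M →ₗ[Aᵐᵒᵖ] N}
    (hf : Surjective f) : Surjective (eMap k A d f) := by
  intro y
  obtain ⟨y, rfl⟩ := Submodule.mkQ_surjective _ y
  obtain ⟨g, rfl⟩ := b.exists_comp_eq f hf y
  exact ⟨Submodule.Quotient.mk g, rfl⟩

/-- If `g : P → ker f` becomes `g' ∘ d` in `M`, then `f ∘ g'` factors through `Coker d`, hence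
vanishes, so `g'` already lands in `ker f`. -/
lemma surjective_homMap_ker (d : P →ₗ[Aᵐᵒᵖ] Q) {f : M →ₗ[Aᵐᵒᵖ] N}
    (hinj : Injective (eMap k A d f)) (hC : ∀ φ : (Q ⧸ LinearMap.range d) →ₗ[Aᵐᵒᵖ] N, φ = 0) :
    Surjective (homMap k A (LinearMap.ker f) d) := by
  intro g
  have hfg : f ∘ₗ (LinearMap.ker f).subtype ∘ₗ g = 0 := LinearMap.ext fun x => (g x).2
  obtain ⟨g', hg'⟩ : (LinearMap.ker f).subtype ∘ₗ g ∈ LinearMap.range (homMap k A M d) := by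
    rw [← Submodule.Quotient.mk_eq_zero, ← map_eq_zero_iff _ hinj]
    exact (Submodule.Quotient.mk_eq_zero _).mpr ⟨0, (map_zero _).trans hfg.symm⟩
  change g' ∘ₗ d = _ at hg'
  have hle : LinearMap.range d ≤ LinearMap.ker (f ∘ₗ g') := by
    rintro _ ⟨x, rfl⟩
    exact LinearMap.mem_ker.mpr (LinearMap.congr_fun (hg' ▸ hfg) x)
  have hfg' : f ∘ₗ g' = 0 := by
    simpa using congrArg (· ∘ₗ (LinearMap.range d).mkQ) (hC ((LinearMap.range d).liftQ _ hle))
  exact ⟨g'.codRestrict _ fun y => LinearMap.congr_fun hfg' y,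
    LinearMap.ext fun x => Subtype.ext (LinearMap.congr_fun hg' x)⟩

end Presentations

section Extensions

variable (k : Type) [Field k] (A : Type) [Ring A] [Algebra k A]
variable {E M : Type} [AddCommGroup E] [Module Aᵐᵒᵖ E] [AddCommGroup M] [Module Aᵐᵒᵖ M]

/-- The lifting form of `Ext¹(Coker d, K) = 0`, deduced from `E(d, K) = 0`. -/
lemma exists_lift_of_surjective_homMap {P Q K : Type} [AddCommGroup P] [Module Aᵐᵒᵖ P]
    [AddCommGroup Q] [Module Aᵐᵒᵖ Q]
    [AddCommGroup K] [Module k K] [Module Aᵐᵒᵖ K] [IsScalarTower k Aᵐᵒᵖ K]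
    (b : FiniteDualBasis A Q) (d : P →ₗ[Aᵐᵒᵖ] Q) {j : K →ₗ[Aᵐᵒᵖ] E} (hj : Injective j)
    {q : E →ₗ[Aᵐᵒᵖ] M} (hq : Surjective q) (hjq : LinearMap.range j = LinearMap.ker q)
    (hK : Surjective (homMap k A K d)) (f : (Q ⧸ LinearMap.range d) →ₗ[Aᵐᵒᵖ] M) :
    ∃ h : (Q ⧸ LinearMap.range d) →ₗ[Aᵐᵒᵖ] E, q ∘ₗ h = f := by
  have hqj : q ∘ₗ j = 0 := LinearMap.range_le_ker_iff.mp hjq.le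
  obtain ⟨u, hu⟩ := b.exists_comp_eq q hq (f ∘ₗ (LinearMap.range d).mkQ)
  obtain ⟨v, hv⟩ := exists_comp_eq_of_range_le A hj (f := u ∘ₗ d) <| by
    rintro _ ⟨x, rfl⟩
    rw [hjq, LinearMap.mem_ker, ← LinearMap.comp_apply q, ← LinearMap.comp_assoc, hu,
      LinearMap.comp_apply, LinearMap.comp_apply, Submodule.mkQ_apply,
      (Submodule.Quotient.mk_eq_zero _).mpr (LinearMap.mem_range_self d x), map_zero]
  obtain ⟨w, hw⟩ := hK v
  change w ∘ₗ d = v at hw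
  have hle : LinearMap.range d ≤ LinearMap.ker (u - j ∘ₗ w) := by
    rintro _ ⟨x, rfl⟩
    change (u ∘ₗ d) x - (j ∘ₗ w ∘ₗ d) x = 0
    rw [hw, hv, sub_self]
  refine ⟨(LinearMap.range d).liftQ _ hle, Submodule.linearMap_qext _ ?_⟩
  rw [LinearMap.comp_assoc, Submodule.liftQ_mkQ, LinearMap.comp_sub, hu, ← LinearMap.comp_assoc,
    hqj, LinearMap.zero_comp, sub_zero]

/-- The lift `h` vanishes on `ker π` because it maps `ker π` into `I'`, so it descends to `M`. -/
lemma exists_rightInverse_of_lift {L I' : Type} [AddCommGroup L] [Module Aᵐᵒᵖ L]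
    [AddCommGroup I'] [Module Aᵐᵒᵖ I'] {π : L →ₗ[Aᵐᵒᵖ] M} (hπ : Surjective π)
    {j : I' →ₗ[Aᵐᵒᵖ] E} (hj : Injective j) {q : E →ₗ[Aᵐᵒᵖ] M}
    (hjq : LinearMap.range j = LinearMap.ker q) {h : L →ₗ[Aᵐᵒᵖ] E} (hqh : q ∘ₗ h = π)
    (hK : ∀ t : LinearMap.ker π →ₗ[Aᵐᵒᵖ] I', t = 0) :
    ∃ σ : M →ₗ[Aᵐᵒᵖ] E, q ∘ₗ σ = LinearMap.id := by
  obtain ⟨t, ht⟩ := exists_comp_eq_of_range_le A hj (f := h ∘ₗ (LinearMap.ker π).subtype) <| by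
    rintro _ ⟨z, rfl⟩
    rw [hjq, LinearMap.mem_ker, ← LinearMap.comp_apply q, ← LinearMap.comp_assoc, hqh]
    exact z.2
  have hker : LinearMap.ker π ≤ LinearMap.ker h := fun z hz => by
    simpa [hK t] using (LinearMap.congr_fun ht ⟨z, hz⟩).symm
  refine ⟨(LinearMap.ker π).liftQ h hker ∘ₗ (π.quotKerEquivOfSurjective hπ).symm.toLinearMap,
    LinearMap.ext fun y => ?_⟩
  obtain ⟨x, rfl⟩ := hπ y
  simp [LinearMap.quotKerEquivOfSurjective_symm_apply, ← LinearMap.comp_apply q, hqh]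

end Extensions

section Image

variable (k : Type) [Field k] (A : Type) [Ring A] [Algebra k A]
variable {L I N : Type} [AddCommGroup L] [Module Aᵐᵒᵖ L] [AddCommGroup I] [Module Aᵐᵒᵖ I]
  [AddCommGroup N] [Module k N] [Module Aᵐᵒᵖ N] [IsScalarTower k Aᵐᵒᵖ N]
variable {π : L →ₗ[Aᵐᵒᵖ] I} {ι : I →ₗ[Aᵐᵒᵖ] N}

lemma finrank_hom_to_image [Module k I] [IsScalarTower k Aᵐᵒᵖ I] (hι : Injective ι)
    (hπι : ι ∘ₗ π ≠ 0) (h : finrank k (L →ₗ[Aᵐᵒᵖ] N) = 1) : finrank k (L →ₗ[Aᵐᵒᵖ] I) = 1 :=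
  have : Nontrivial (L →ₗ[Aᵐᵒᵖ] I) := nontrivial_of_ne π 0 (by rintro rfl; simp at hπι)
  finrank_eq_one_of_injective (postMap_injective k A hι) h

lemma finrank_hom_from_image (hπ : Surjective π) (hπι : ι ∘ₗ π ≠ 0)
    (h : finrank k (L →ₗ[Aᵐᵒᵖ] N) = 1) : finrank k (I →ₗ[Aᵐᵒᵖ] N) = 1 :=
  have : Nontrivial (I →ₗ[Aᵐᵒᵖ] N) := nontrivial_of_ne ι 0 (by rintro rfl; simp at hπι)
  finrank_eq_one_of_injective (homMap_injective k A hπ) h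

/-- `φ ↦ ι ∘ φ ∘ π` embeds `End_A(I)` into the line `Hom_A(L, N)`. -/
lemma exists_eq_smul_id_of_image [Module k I] [IsScalarTower k Aᵐᵒᵖ I] (hπ : Surjective π)
    (hι : Injective ι) (hπι : ι ∘ₗ π ≠ 0) (h : finrank k (L →ₗ[Aᵐᵒᵖ] N) = 1) (φ : I →ₗ[Aᵐᵒᵖ] I) :
    ∃ c : k, φ = c • (LinearMap.id : I →ₗ[Aᵐᵒᵖ] I) := by
  have hid_ne : (LinearMap.id : I →ₗ[Aᵐᵒᵖ] I) ≠ 0 := fun h0 =>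
    hπι (by rw [← LinearMap.id_comp π, h0, LinearMap.zero_comp, LinearMap.comp_zero])
  have : Nontrivial (I →ₗ[Aᵐᵒᵖ] I) := nontrivial_of_ne _ _ hid_ne
  have hEnd := finrank_eq_one_of_injective (f := postMap k A L ι ∘ₗ homMap k A I π)
    ((postMap_injective k A hι).comp (homMap_injective k A hπ)) h
  obtain ⟨c, hc⟩ := (finrank_eq_one_iff_of_nonzero' _ hid_ne).mp hEnd φ
  exact ⟨c, hc.symm⟩

end Image

theorem statement16_general (k : Type) [Field k]
    (A : Type) [Ring A] [Algebra k A] [FiniteDimensional k A]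
    {n : ℕ} (e : Fin n → A) (hA : IsBasicSetup A e)
    (β0m β0p βmm βmp βpm βpp : Fin n → ℕ)
    (d0 : PP A e β0m →ₗ[Aᵐᵒᵖ] PP A e β0p)
    (dm : PP A e βmm →ₗ[Aᵐᵒᵖ] PP A e βmp)
    (dp : PP A e βpm →ₗ[Aᵐᵒᵖ] PP A e βpp)
    (hrig0p : Function.Surjective (homMap k A
      ((PP A e β0p × PP A e βpp) ⧸ LinearMap.range (LinearMap.prodMap d0 dp))
      (LinearMap.prodMap d0 dp)))
    (hm0 : Function.Surjective (homMap k A (Coker A e d0) dm))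
    (hmm : Function.Surjective (homMap k A (Coker A e dm) dm))
    (hmp : eNum k A (Coker A e dp) dm = 1) :
    ∀ (Nτ : Type) (igN : AddCommGroup Nτ), letI := igN;
    ∀ (ikN : Module k Nτ) (imN : Module Aᵐᵒᵖ Nτ), letI := ikN; letI := imN;
    ∀ (itN : IsScalarTower k Aᵐᵒᵖ Nτ), letI := itN;
    ∀ (ιτ : Nτ →ₗ[Aᵐᵒᵖ] Nu k A (PP A e βmm)),
      Function.Injective ιτ → LinearMap.range ιτ = LinearMap.ker (nuMap k A dm) →
      finrank k (Coker A e dp →ₗ[Aᵐᵒᵖ] Nτ) = 1 ∧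
      (∀ g : Coker A e dp →ₗ[Aᵐᵒᵖ] Nτ, g ≠ 0 →
        ∀ (I : Type) (igI : AddCommGroup I), letI := igI;
        ∀ (ikI : Module k I) (imI : Module Aᵐᵒᵖ I), letI := ikI; letI := imI;
        ∀ (itI : IsScalarTower k Aᵐᵒᵖ I), letI := itI;
        ∀ (π : Coker A e dp →ₗ[Aᵐᵒᵖ] I) (ι : I →ₗ[Aᵐᵒᵖ] Nτ),
          Function.Surjective π → Function.Injective ι → ι ∘ₗ π = g →
          ((∀ φ : Coker A e d0 →ₗ[Aᵐᵒᵖ] I, φ = 0) ∧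
            Function.Surjective (homMap k A I d0)) ∧
          (finrank k (Coker A e dp →ₗ[Aᵐᵒᵖ] I) = 1 ∧
            Function.Surjective (homMap k A I dp)) ∧
          ((∀ φ : Coker A e dm →ₗ[Aᵐᵒᵖ] I, φ = 0) ∧ eNum k A I dm = 1) ∧
          (∀ φ : I →ₗ[Aᵐᵒᵖ] I, ∃ c : k, φ = c • (LinearMap.id : I →ₗ[Aᵐᵒᵖ] I)) ∧
          Ext1SelfVanishes A I) := by
  intro Nτ _ _ _ _ ιτ hιτ hrange
  have hid := hA.1
  have duality := finrank_hom_eq_eNum k A (ppDualBasis A e hid βmm) (ppDualBasis A e hid βmp) dm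
    hιτ hrange
  have : FiniteDimensional k Nτ := finiteDimensional_of_injective_of_tower k A ιτ hιτ
  have hLN : finrank k (Coker A e dp →ₗ[Aᵐᵒᵖ] Nτ) = 1 := (duality _).trans hmp
  refine ⟨hLN, fun g hg I _ _ _ _ π ι hπ hι hπι => ?_⟩
  subst hπι
  have hvanish : ∀ (C : Type) [AddCommGroup C] [Module k C] [Module Aᵐᵒᵖ C]
      [IsScalarTower k Aᵐᵒᵖ C] [FiniteDimensional k C],
      Surjective (homMap k A C dm) → ∀ φ : C →ₗ[Aᵐᵒᵖ] I, φ = 0 := by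
    intro C _ _ _ _ _ hC φ
    have : Subsingleton (C →ₗ[Aᵐᵒᵖ] Nτ) :=
      finrank_zero_iff.mp ((duality C).trans (eNum_eq_zero_of_surjective k A hC))
    exact postMap_injective k A hι (Subsingleton.elim _ _)
  obtain ⟨hL0, hLp⟩ := surjective_homMap_coker_of_prodMap k A (ppDualBasis A e hid β0m)
    (ppDualBasis A e hid βpm) d0 dp hrig0p
  have hIp := surjective_homMap_of_surjective k A (ppDualBasis A e hid βpm) dp hπ hLp
  have hIm : eNum k A I dm = 1 := (duality I).symm.trans (finrank_hom_from_image k A hπ hg hLN)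
  refine ⟨⟨hvanish _ hm0, surjective_homMap_of_surjective k A (ppDualBasis A e hid β0m) d0 hπ hL0⟩,
    ⟨finrank_hom_to_image k A hι hg hLN, hIp⟩, ⟨hvanish _ hmm, hIm⟩,
    exists_eq_smul_id_of_image k A hπ hι hg hLN, ?_⟩
  have : FiniteDimensional k I := finiteDimensional_of_injective_of_tower k A ι hι
  have hK : Surjective (homMap k A (LinearMap.ker π) dm) :=
    surjective_homMap_ker k A dm ((LinearMap.injective_iff_surjective_of_finrank_eq_finrank
      (hmp.trans hIm.symm)).mpr (eMap_surjective k A (ppDualBasis A e hid βmm) dm hπ))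
      (hvanish _ hmm)
  intro E _ _ j q hj hq hjq
  obtain ⟨h, hh⟩ :=
    exists_lift_of_surjective_homMap k A (ppDualBasis A e hid βpp) dp hj hq hjq hIp π
  exact exists_rightInverse_of_lift A hπ hj hjq hh (hvanish _ hK)

/-- Construction of the real Schur representation attached to an
exchange pair: with `d₀, d₋, d₊` as in the hypotheses, `L := Coker d₊` and
`N^τ := ker ν(d₋)` (realized as any module `Nτ` embedded in `ν(P₋)` with image
`ker ν(d₋)`), we have `dim_k Hom_A(L, N^τ) = 1`, and the image `I` of any nonzero
homomorphism `L → N^τ` satisfies `Hom(Coker d₀, I) = 0`, `E(d₀,I) = 0`,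
`dim Hom(Coker d₊, I) = 1`, `E(d₊,I) = 0`, `Hom(Coker d₋, I) = 0`, `dim E(d₋,I) = 1`;
moreover `End_A(I) = k` and `Ext¹_A(I,I) = 0`. -/
theorem statement16 (k : Type) [Field k] [IsAlgClosed k] [CharZero k]
    (A : Type) [Ring A] [Algebra k A] [FiniteDimensional k A]
    {n : ℕ} (e : Fin n → A) (hA : IsBasicSetup A e)
    (β0m β0p βmm βmp βpm βpp : Fin n → ℕ)
    (d0 : PP A e β0m →ₗ[Aᵐᵒᵖ] PP A e β0p)
    (dm : PP A e βmm →ₗ[Aᵐᵒᵖ] PP A e βmp)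
    (dp : PP A e βpm →ₗ[Aᵐᵒᵖ] PP A e βpp)
    (hrig0p : Function.Surjective (homMap k A
      ((PP A e β0p × PP A e βpp) ⧸ LinearMap.range (LinearMap.prodMap d0 dp))
      (LinearMap.prodMap d0 dp)))
    (hm0 : Function.Surjective (homMap k A (Coker A e d0) dm))
    (hmm : Function.Surjective (homMap k A (Coker A e dm) dm))
    (hmp : eNum k A (Coker A e dp) dm = 1) :
    ∀ (Nτ : Type) (igN : AddCommGroup Nτ), letI := igN;
    ∀ (ikN : Module k Nτ) (imN : Module Aᵐᵒᵖ Nτ), letI := ikN; letI := imN;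
    ∀ (itN : IsScalarTower k Aᵐᵒᵖ Nτ), letI := itN;
    ∀ (ιτ : Nτ →ₗ[Aᵐᵒᵖ] Nu k A (PP A e βmm)),
      Function.Injective ιτ → LinearMap.range ιτ = LinearMap.ker (nuMap k A dm) →
      finrank k (Coker A e dp →ₗ[Aᵐᵒᵖ] Nτ) = 1 ∧
      (∀ g : Coker A e dp →ₗ[Aᵐᵒᵖ] Nτ, g ≠ 0 →
        ∀ (I : Type) (igI : AddCommGroup I), letI := igI;
        ∀ (ikI : Module k I) (imI : Module Aᵐᵒᵖ I), letI := ikI; letI := imI;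
        ∀ (itI : IsScalarTower k Aᵐᵒᵖ I), letI := itI;
        ∀ (π : Coker A e dp →ₗ[Aᵐᵒᵖ] I) (ι : I →ₗ[Aᵐᵒᵖ] Nτ),
          Function.Surjective π → Function.Injective ι → ι ∘ₗ π = g →
          ((∀ φ : Coker A e d0 →ₗ[Aᵐᵒᵖ] I, φ = 0) ∧
            Function.Surjective (homMap k A I d0)) ∧
          (finrank k (Coker A e dp →ₗ[Aᵐᵒᵖ] I) = 1 ∧
            Function.Surjective (homMap k A I dp)) ∧
          ((∀ φ : Coker A e dm →ₗ[Aᵐᵒᵖ] I, φ = 0) ∧ eNum k A I dm = 1) ∧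
          (∀ φ : I →ₗ[Aᵐᵒᵖ] I, ∃ c : k, φ = c • (LinearMap.id : I →ₗ[Aᵐᵒᵖ] I)) ∧
          Ext1SelfVanishes A I) :=
  statement16_general k A e hA β0m β0p βmm βmp βpm βpp d0 dm dp hrig0p hm0 hmm hmp
end

section
/- Let I be a right ideal of A such that I is the unique right ideal of A with its dimension vector, i.e., every right ideal J of A with dim_k(J e_i) = dim_k(I e_i) for all i = 1, …, n satisfies J = I. Then I is a two-sided ideal of A. -/
open TropGP Module MulOpposite

/-! Over an infinite field the spectrum of an element `a` of a finite-dimensional algebra is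
finite, so `a = c - u` for a scalar `c` and a unit `u`. Left multiplication by `u` is an
automorphism of the right regular module, so `u I ≅ I` has the dimension vector of `I`, and
uniqueness forces `u I = I`. Hence `a I ⊆ c I + u I ⊆ I`. -/

section UnitShift

variable (k : Type) [Field k] {A : Type} [Ring A] [Algebra k A]

theorem spectrum_subset_spectrum_lmul (a : A) :
    spectrum k a ⊆ spectrum k (Algebra.lmul k A a) := by
  intro c hc
  rw [spectrum.mem_iff] at hc ⊢
  rwa [← (Algebra.lmul k A).commutes, ← map_sub, Algebra.lmul_isUnit_iff]

theorem spectrum_finite_of_finiteDimensional [FiniteDimensional k A] (a : A) :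
    (spectrum k a).Finite :=
  (Module.End.finite_spectrum _).subset (spectrum_subset_spectrum_lmul k a)

theorem exists_isUnit_algebraMap_sub [Infinite k] [FiniteDimensional k A] (a : A) :
    ∃ c : k, IsUnit (algebraMap k A c - a) := by
  obtain ⟨c, hc⟩ := (spectrum_finite_of_finiteDimensional k a).infinite_compl.nonempty
  exact ⟨c, spectrum.notMem_iff.mp hc⟩

end UnitShift

namespace TropGP

variable (k : Type) [Field k] (A : Type) [Ring A] [Algebra k A] {n : ℕ} (e : Fin n → A)

theorem dimVec_congr {M N : Type} [AddCommGroup M] [Module k M] [Module Aᵐᵒᵖ M]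
    [IsScalarTower k Aᵐᵒᵖ M] [AddCommGroup N] [Module k N] [Module Aᵐᵒᵖ N]
    [IsScalarTower k Aᵐᵒᵖ N] (f : M ≃ₗ[Aᵐᵒᵖ] N) : dimVec k A e M = dimVec k A e N := by
  funext i
  have hcomm : (f.restrictScalars k : M →ₗ[k] N) ∘ₗ rmul k A e M i
      = rmul k A e N i ∘ₗ (f.restrictScalars k : M →ₗ[k] N) :=
    LinearMap.ext fun x => f.map_smul (op (e i)) x
  have hrange : (LinearMap.range (rmul k A e M i)).map (f.restrictScalars k : M →ₗ[k] N)
      = LinearMap.range (rmul k A e N i) := by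
    rw [← LinearMap.range_comp, hcomm,
      LinearMap.range_comp_of_range_eq_top _ (LinearEquiv.range _)]
  simp only [dimVec]
  rw [← hrange, LinearEquiv.finrank_map_eq]

theorem dimVec_map_mulLeft {u : A} (hu : IsUnit u) (L : Submodule Aᵐᵒᵖ A) :
    dimVec k A e (L.map (LinearMap.mulLeft Aᵐᵒᵖ u)) = dimVec k A e L :=
  (dimVec_congr k A e (L.equivMapOfInjective _ hu.mul_right_injective)).symm

end TropGP

theorem statement17_general (k : Type) [Field k] [IsAlgClosed k]
    (A : Type) [Ring A] [Algebra k A] [FiniteDimensional k A]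
    {n : ℕ} (e : Fin n → A)
    (I : Submodule Aᵐᵒᵖ A)
    (huniq : ∀ J : Submodule Aᵐᵒᵖ A, dimVec k A e J = dimVec k A e I → J = I) :
    ∀ a : A, ∀ x ∈ I, a * x ∈ I := by
  intro a x hx
  obtain ⟨c, hc⟩ := exists_isUnit_algebraMap_sub k a
  have hshift : (algebraMap k A c - a) * x ∈ I := by
    rw [← huniq _ (dimVec_map_mulLeft k A e hc I)]
    exact ⟨x, hx, rfl⟩
  have hscalar : algebraMap k A c * x ∈ I := by
    rw [← Algebra.smul_def]
    exact I.smul_of_tower_mem c hx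
  simpa [sub_mul] using sub_mem hscalar hshift

/-- A right ideal `I` of `A` which is the unique right ideal with its
dimension vector is a two-sided ideal. -/
theorem statement17 (k : Type) [Field k] [IsAlgClosed k] [CharZero k]
    (A : Type) [Ring A] [Algebra k A] [FiniteDimensional k A]
    {n : ℕ} (e : Fin n → A) (hA : IsBasicSetup A e)
    (I : Submodule Aᵐᵒᵖ A)
    (huniq : ∀ J : Submodule Aᵐᵒᵖ A, dimVec k A e J = dimVec k A e I → J = I) :
    ∀ a : A, ∀ x ∈ I, a * x ∈ I :=
  statement17_general k A e I huniq
end
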